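/- arXiv:2010.08970 — 3 statements merged into one kernel-verified Lean document; each statement's English description precedes it below -/
import Mathlib

section
/- Suppose G = M₁M₂ with M₁ a closed normal subgroup and M₂ a closed subgroup of the profinite group G. Let χ₁, χ₂ : G → R⁺ and ω₁ : M₁ → R⁺, ω₂ : M₂ → R⁺ be continuous homomorphisms with ω₁ and ω₂ trivial on M₁ ∩ M₂. Then the map ψ(g) = [[1, χ₁(g), ω₁(g₁)+ω₂(g₂)],[0,1,χ₂(g)],[0,0,1]] (where g = g₁g₂, g₁ ∈ M₁, g₂ ∈ M₂) is well-defined, and ψ is a group homomorphism into U_2(R) if and only if for all g = g₁g₂ and g' = g'₁g'₂ with g₁,g'₁ ∈ M₁ and g₂,g'₂ ∈ M₂, one has ω₁(g₂g'₁g₂⁻¹) − ω₁(g'₁) = χ₁(g)·χ₂(g'). -/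
/-!
Writing `g = g₁g₂` and `g' = g'₁g'₂`, normality of `M₁` gives
`gg' = (g₁ · g₂g'₁g₂⁻¹)(g₂g'₂)`. The product of two upper unitriangular matrices has corner entry
`z + x y' + z'`, so `ψ` is multiplicative iff `w(gg') = w(g) + χ₁(g)χ₂(g') + w(g')`, and expanding
`w` with the additivity of `ω₁, ω₂` leaves exactly `ω₁(g₂g'₁g₂⁻¹) = ω₁(g'₁) + χ₁(g)χ₂(g')`.
Well-definedness holds because two decompositions of `g` differ by an element of `M₁ ∩ M₂`.
-/

section Unitriangular

variable {R : Type*} [Semiring R]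

theorem unitriangular_mul_unitriangular (x y z x' y' z' : R) :
    (!![1, x, z; 0, 1, y; 0, 0, 1] : Matrix (Fin 3) (Fin 3) R) * !![1, x', z'; 0, 1, y'; 0, 0, 1] =
      !![1, x + x', z + x * y' + z'; 0, 1, y + y'; 0, 0, 1] := by
  simp [add_comm, add_left_comm]

theorem unitriangular_eq_unitriangular_iff {x y z x' y' z' : R} :
    (!![1, x, z; 0, 1, y; 0, 0, 1] : Matrix (Fin 3) (Fin 3) R) = !![1, x', z'; 0, 1, y'; 0, 0, 1] ↔
      x = x' ∧ y = y' ∧ z = z' := by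
  constructor
  · intro h
    exact ⟨congr_fun₂ h 0 1, congr_fun₂ h 1 2, congr_fun₂ h 0 2⟩
  · rintro ⟨rfl, rfl, rfl⟩
    rfl

theorem unitriangular_map_mul_iff {G : Type*} [Mul G] (χ₁ χ₂ w : G → R)
    (hχ₁ : ∀ g h, χ₁ (g * h) = χ₁ g + χ₁ h) (hχ₂ : ∀ g h, χ₂ (g * h) = χ₂ g + χ₂ h) (g h : G) :
    (!![1, χ₁ (g * h), w (g * h); 0, 1, χ₂ (g * h); 0, 0, 1] : Matrix (Fin 3) (Fin 3) R) =
        !![1, χ₁ g, w g; 0, 1, χ₂ g; 0, 0, 1] * !![1, χ₁ h, w h; 0, 1, χ₂ h; 0, 0, 1] ↔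
      w (g * h) = w g + χ₁ g * χ₂ h + w h := by
  rw [unitriangular_mul_unitriangular, unitriangular_eq_unitriangular_iff]
  simp [hχ₁, hχ₂]

end Unitriangular

section Decomposition

variable {G : Type*} [Group G] {M₁ M₂ : Subgroup G}

theorem add_eq_add_of_coe_mul_eq {R : Type*} [AddCommMonoid R]
    {ω₁ : M₁ → R} (hω₁ : ∀ a b, ω₁ (a * b) = ω₁ a + ω₁ b)
    {ω₂ : M₂ → R} (hω₂ : ∀ a b, ω₂ (a * b) = ω₂ a + ω₂ b)
    (htriv : ∀ g (h1 : g ∈ M₁) (h2 : g ∈ M₂), ω₁ ⟨g, h1⟩ = 0 ∧ ω₂ ⟨g, h2⟩ = 0)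
    {a a' : M₁} {b b' : M₂} (hab : (a : G) * b = a' * b') :
    ω₁ a + ω₂ b = ω₁ a' + ω₂ b' := by
  have hdiff : ((a'⁻¹ * a : M₁) : G) = ((b' * b⁻¹ : M₂) : G) := by
    rw [Subgroup.coe_mul, Subgroup.coe_mul, Subgroup.coe_inv, Subgroup.coe_inv,
      inv_mul_eq_iff_eq_mul, ← mul_assoc, eq_mul_inv_iff_mul_eq, hab]
  have hmem : ((a'⁻¹ * a : M₁) : G) ∈ M₂ := hdiff ▸ (b' * b⁻¹).2
  obtain ⟨h₁, h₂⟩ := htriv _ (a'⁻¹ * a).2 hmem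
  have h₂' : ω₂ (b' * b⁻¹) = 0 := by
    rwa [show (⟨_, hmem⟩ : M₂) = b' * b⁻¹ from Subtype.ext hdiff] at h₂
  calc ω₁ a + ω₂ b = ω₁ (a' * (a'⁻¹ * a)) + ω₂ b := by rw [mul_inv_cancel_left]
    _ = ω₁ a' + ω₂ b := by rw [hω₁, h₁, add_zero]
    _ = ω₁ a' + ω₂ (b' * b⁻¹ * b) := by rw [hω₂, h₂', zero_add]
    _ = ω₁ a' + ω₂ b' := by rw [inv_mul_cancel_right]

theorem forall_forall_iff_of_forall_exists_mul (hprod : ∀ g : G, ∃ g₁ ∈ M₁, ∃ g₂ ∈ M₂, g = g₁ * g₂)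
    (P : G → G → Prop) :
    (∀ g h, P g h) ↔ ∀ (a a' : M₁) (b b' : M₂), P (a * b) (a' * b') := by
  refine ⟨fun h _ _ _ _ ↦ h _ _, fun h g g' ↦ ?_⟩
  obtain ⟨g₁, hg₁, g₂, hg₂, rfl⟩ := hprod g
  obtain ⟨g₁', hg₁', g₂', hg₂', rfl⟩ := hprod g'
  exact h ⟨g₁, hg₁⟩ ⟨g₁', hg₁'⟩ ⟨g₂, hg₂⟩ ⟨g₂', hg₂'⟩

theorem Subgroup.Normal.mul_mul_mul_eq (hN : M₁.Normal) (a a' : M₁) (b b' : M₂) :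
    (a : G) * b * (a' * b') =
      ((a * ⟨b * a' * (b : G)⁻¹, hN.conj_mem a' a'.2 b⟩ : M₁) : G) * ((b * b' : M₂) : G) := by
  simp only [Subgroup.coe_mul]
  group

theorem cocycle_at_mul_mul_iff {R : Type*} [CommRing R] (hN : M₁.Normal) (χ₁ χ₂ w : G → R)
    {ω₁ : M₁ → R} (hω₁ : ∀ a b, ω₁ (a * b) = ω₁ a + ω₁ b)
    {ω₂ : M₂ → R} (hω₂ : ∀ a b, ω₂ (a * b) = ω₂ a + ω₂ b)
    (hw : ∀ (a : M₁) (b : M₂), w (a * b) = ω₁ a + ω₂ b) (a a' : M₁) (b b' : M₂) :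
    w (a * b * (a' * b')) = w (a * b) + χ₁ (a * b) * χ₂ (a' * b') + w (a' * b') ↔
      ω₁ ⟨b * a' * (b : G)⁻¹, hN.conj_mem a' a'.2 b⟩ - ω₁ a' = χ₁ (a * b) * χ₂ (a' * b') := by
  rw [hN.mul_mul_mul_eq, hw, hw, hw, hω₁, hω₂]
  constructor <;> intro h <;> linear_combination h

end Decomposition

theorem psi_well_defined_and_hom_iff_general (R : Type) [CommRing R]
    (G : Type) [Group G]
    (M₁ M₂ : Subgroup G) (hN : M₁.Normal)
    (hprod : ∀ g : G, ∃ g₁ ∈ M₁, ∃ g₂ ∈ M₂, g = g₁ * g₂)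
    (χ₁ χ₂ : G → R)
    (hχ₁ : ∀ g h, χ₁ (g * h) = χ₁ g + χ₁ h)
    (hχ₂ : ∀ g h, χ₂ (g * h) = χ₂ g + χ₂ h)
    (ω₁ : M₁ → R) (hω₁ : ∀ a b : M₁, ω₁ (a * b) = ω₁ a + ω₁ b)
    (ω₂ : M₂ → R) (hω₂ : ∀ a b : M₂, ω₂ (a * b) = ω₂ a + ω₂ b)
    (htriv : ∀ g (h1 : g ∈ M₁) (h2 : g ∈ M₂), ω₁ ⟨g, h1⟩ = 0 ∧ ω₂ ⟨g, h2⟩ = 0) :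
    -- well-definedness of `g ↦ ω₁(g₁) + ω₂(g₂)`:
    (∀ (a a' : M₁) (b b' : M₂), (a : G) * b = (a' : G) * b' →
        ω₁ a + ω₂ b = ω₁ a' + ω₂ b') ∧
    -- the homomorphism criterion for ψ:
    (∀ w : G → R, (∀ (a : M₁) (b : M₂), w ((a : G) * b) = ω₁ a + ω₂ b) →
      ((∀ g h : G,
          (!![1, χ₁ (g * h), w (g * h); 0, 1, χ₂ (g * h); 0, 0, 1] :
              Matrix (Fin 3) (Fin 3) R)
            = !![1, χ₁ g, w g; 0, 1, χ₂ g; 0, 0, 1] *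
              !![1, χ₁ h, w h; 0, 1, χ₂ h; 0, 0, 1]) ↔
        ∀ (a a' : M₁) (b b' : M₂),
          ω₁ ⟨(b : G) * a' * (b : G)⁻¹, hN.conj_mem (a' : G) a'.2 (b : G)⟩ - ω₁ a'
            = χ₁ ((a : G) * b) * χ₂ ((a' : G) * b'))) := by
  refine ⟨fun a a' b b' ↦ add_eq_add_of_coe_mul_eq hω₁ hω₂ htriv, fun w hw ↦ ?_⟩
  simp only [unitriangular_map_mul_iff χ₁ χ₂ w hχ₁ hχ₂]
  rw [forall_forall_iff_of_forall_exists_mul hprod]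
  exact forall₄_congr fun a a' b b' ↦ cocycle_at_mul_mul_iff hN χ₁ χ₂ w hω₁ hω₂ hw a a' b b'

/-- Suppose `G = M₁M₂` with `M₁` a closed normal subgroup and `M₂` a closed subgroup of the
profinite group `G`, and let `χ₁, χ₂ : G → R⁺`, `ω₁ : M₁ → R⁺`, `ω₂ : M₂ → R⁺` be continuous
homomorphisms with `ω₁, ω₂` trivial on `M₁ ∩ M₂`.  Then
`ψ(g) = [[1, χ₁(g), ω₁(g₁)+ω₂(g₂)], [0,1,χ₂(g)], [0,0,1]]` (for `g = g₁g₂`) is well defined,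
and `ψ` is a group homomorphism into `U_2(R)` iff
`ω₁(g₂g'₁g₂⁻¹) − ω₁(g'₁) = χ₁(g)·χ₂(g')` for all decompositions `g = g₁g₂`, `g' = g'₁g'₂`. -/
theorem psi_well_defined_and_hom_iff (R : Type) [CommRing R]
    (G : Type) [Group G] [TopologicalSpace G] [IsTopologicalGroup G]
    [CompactSpace G] [TotallyDisconnectedSpace G] [T2Space G]
    (M₁ M₂ : Subgroup G) (hN : M₁.Normal)
    (hcl₁ : IsClosed (M₁ : Set G)) (hcl₂ : IsClosed (M₂ : Set G))
    (hprod : ∀ g : G, ∃ g₁ ∈ M₁, ∃ g₂ ∈ M₂, g = g₁ * g₂)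
    (χ₁ χ₂ : G → R)
    (hχ₁ : ∀ g h, χ₁ (g * h) = χ₁ g + χ₁ h) (hχ₁c : IsLocallyConstant χ₁)
    (hχ₂ : ∀ g h, χ₂ (g * h) = χ₂ g + χ₂ h) (hχ₂c : IsLocallyConstant χ₂)
    (ω₁ : M₁ → R) (hω₁ : ∀ a b : M₁, ω₁ (a * b) = ω₁ a + ω₁ b)
    (hω₁c : IsLocallyConstant ω₁)
    (ω₂ : M₂ → R) (hω₂ : ∀ a b : M₂, ω₂ (a * b) = ω₂ a + ω₂ b)
    (hω₂c : IsLocallyConstant ω₂)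
    (htriv : ∀ g (h1 : g ∈ M₁) (h2 : g ∈ M₂), ω₁ ⟨g, h1⟩ = 0 ∧ ω₂ ⟨g, h2⟩ = 0) :
    -- well-definedness of `g ↦ ω₁(g₁) + ω₂(g₂)`:
    (∀ (a a' : M₁) (b b' : M₂), (a : G) * b = (a' : G) * b' →
        ω₁ a + ω₂ b = ω₁ a' + ω₂ b') ∧
    -- the homomorphism criterion for ψ:
    (∀ w : G → R, (∀ (a : M₁) (b : M₂), w ((a : G) * b) = ω₁ a + ω₂ b) →
      ((∀ g h : G,
          (!![1, χ₁ (g * h), w (g * h); 0, 1, χ₂ (g * h); 0, 0, 1] :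
              Matrix (Fin 3) (Fin 3) R)
            = !![1, χ₁ g, w g; 0, 1, χ₂ g; 0, 0, 1] *
              !![1, χ₁ h, w h; 0, 1, χ₂ h; 0, 0, 1]) ↔
        ∀ (a a' : M₁) (b b' : M₂),
          ω₁ ⟨(b : G) * a' * (b : G)⁻¹, hN.conj_mem (a' : G) a'.2 (b : G)⟩ - ω₁ a'
            = χ₁ ((a : G) * b) * χ₂ ((a' : G) * b'))) :=
  psi_well_defined_and_hom_iff_general R G M₁ M₂ hN hprod χ₁ χ₂ hχ₁ hχ₂ ω₁ hω₁ ω₂ hω₂ htriv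
end

section
/- Let G be a profinite group, m ≥ 2, χ₁, χ₂ ∈ H¹(G, Z/m), M₁ = Ker(χ₁), and σ₁ ∈ G with χ₁(σ₁) = 1 and χ₂(σ₁) = 0, so that G is the disjoint union of the cosets M₁σ₁^i, 0 ≤ i ≤ m−1. Let ω : M₁ → Z/m be a continuous homomorphism trivial on σ₁^m. Then the following are equivalent: (a) there exists a continuous homomorphism ρ : G → U_2(Z/m) with ρ_{12} = χ₁, ρ_{23} = χ₂, and ω = Res_{M₁}(ρ_{13}); (d) (σ₁ − 1)ω = Res_{M₁}(χ₂), where ((σ₁−1)ω)(h) = ω(σ₁hσ₁⁻¹) − ω(h) for h ∈ M₁. -/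
/-! Writing `i(g) ∈ [0, m)` for the representative of `χ₁ g`, every `g` factors as
`(g σ₁^{-i(g)}) σ₁^{i(g)}` with first factor in `M₁`. Given (d), `f g := ω (g σ₁^{-i(g)})` is the
wanted (1,3)-entry: iterating (d) gives `ω (σ₁^i h σ₁^{-i}) = ω h + i χ₂ h`, and the carry `σ₁^m`
that appears when `i(a) + i(b) ≥ m` is killed by `ω (σ₁^m) = 0`. Conversely, the (1,3)-entry `f`
of a homomorphism satisfies `f (a b) = f a + χ₁ a χ₂ b + f b`, and expanding `f (σ₁ h σ₁⁻¹)` by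
this rule gives (d). -/

open Matrix

/-- An (additive, continuous) 1-cocycle of a topological group with values in `R`. -/
def IsChar {G : Type} [Group G] [TopologicalSpace G] {R : Type} [CommRing R] (χ : G → R) : Prop :=
  (∀ g h, χ (g * h) = χ g + χ h) ∧ IsLocallyConstant χ

def IsMulAddHom {G A : Type*} [Mul G] [Add A] (χ : G → A) : Prop :=
  ∀ a b, χ (a * b) = χ a + χ b

namespace IsMulAddHom

variable {G A : Type*} [Group G] {χ : G → A}

theorem map_one [AddGroup A] (hχ : IsMulAddHom χ) : χ 1 = 0 := by
  simpa using hχ 1 1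

theorem map_inv [AddGroup A] (hχ : IsMulAddHom χ) (g : G) : χ g⁻¹ = -χ g := by
  rw [eq_neg_iff_add_eq_zero, ← hχ, inv_mul_cancel, hχ.map_one]

theorem map_pow [AddGroup A] (hχ : IsMulAddHom χ) (g : G) (n : ℕ) : χ (g ^ n) = n • χ g := by
  induction n with
  | zero => simpa using hχ.map_one
  | succ n ih => rw [pow_succ, hχ, ih, succ_nsmul]

theorem map_conj [AddCommGroup A] (hχ : IsMulAddHom χ) (g h : G) : χ (g * h * g⁻¹) = χ h := by
  rw [hχ, hχ, hχ.map_inv]; abel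

theorem normal_of_mem_iff [AddCommGroup A] (hχ : IsMulAddHom χ) {M : Subgroup G}
    (hM : ∀ g, g ∈ M ↔ χ g = 0) : M.Normal :=
  ⟨fun h hh g => (hM _).2 (by rw [hχ.map_conj, ← hM]; exact hh)⟩

end IsMulAddHom

theorem unitriangular_mul {R : Type*} [CommRing R] (a b c a' b' c' : R) :
    !![1, a, c; 0, 1, b; 0, 0, 1] * !![1, a', c'; 0, 1, b'; 0, 0, 1] =
      !![1, a + a', c + a * b' + c'; 0, 1, b + b'; 0, 0, 1] := by
  ext i j; fin_cases i <;> fin_cases j <;> simp [Matrix.mul_apply, Fin.sum_univ_three] <;> ring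

theorem unitriangular_inj {R : Type*} [CommRing R] {a b c a' b' c' : R} :
    !![1, a, c; 0, 1, b; 0, 0, 1] = !![1, a', c'; 0, 1, b'; 0, 0, 1] ↔
      a = a' ∧ c = c' ∧ b = b' := by
  simp [and_assoc]

def IsUnipotentLift {G R : Type*} [Mul G] [CommRing R] (χ₁ χ₂ f : G → R) : Prop :=
  ∀ a b, f (a * b) = f a + χ₁ a * χ₂ b + f b

namespace IsUnipotentLift

variable {G R : Type*} [Group G] [CommRing R] {χ₁ χ₂ f : G → R}

theorem iff_unitriangular_mul (hχ₁ : IsMulAddHom χ₁) (hχ₂ : IsMulAddHom χ₂) :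
    IsUnipotentLift χ₁ χ₂ f ↔ ∀ g h : G,
      !![1, χ₁ (g * h), f (g * h); 0, 1, χ₂ (g * h); 0, 0, 1] =
        !![1, χ₁ g, f g; 0, 1, χ₂ g; 0, 0, 1] * !![1, χ₁ h, f h; 0, 1, χ₂ h; 0, 0, 1] := by
  simp only [unitriangular_mul, unitriangular_inj, hχ₁ _, hχ₂ _, true_and, and_true]
  rfl

theorem map_one (hf : IsUnipotentLift χ₁ χ₂ f) (hχ₁ : IsMulAddHom χ₁) : f 1 = 0 := by
  simpa [hχ₁.map_one] using hf 1 1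

theorem map_conj (hf : IsUnipotentLift χ₁ χ₂ f) (hχ₁ : IsMulAddHom χ₁) (hχ₂ : IsMulAddHom χ₂)
    (σ g : G) : f (σ * g * σ⁻¹) = f g + χ₁ σ * χ₂ g - χ₁ g * χ₂ σ := by
  have hinv := hf σ σ⁻¹
  rw [mul_inv_cancel, hf.map_one hχ₁, hχ₂.map_inv] at hinv
  rw [hf, hf, hχ₁, hχ₂.map_inv]
  linear_combination -hinv

end IsUnipotentLift

theorem mul_mul_inv_pow_eq {G : Type*} [Group G] (a b σ : G) {i j r m q : ℕ}
    (h : r + m * q = i + j) :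
    a * b * σ⁻¹ ^ r = a * σ⁻¹ ^ i * (σ ^ i * (b * σ⁻¹ ^ j) * (σ ^ i)⁻¹) * (σ ^ m) ^ q := by
  have hr : (r : ℤ) = i + j - m * q := by omega
  simp only [← zpow_natCast, hr]
  group

section Construction

variable {G : Type*} [Group G] {m : ℕ} {χ₁ χ₂ : G → ZMod m} {M : Subgroup G} {σ : G}
  {ω : M → ZMod m}

theorem mul_inv_pow_val_mem [NeZero m] (hχ₁ : IsMulAddHom χ₁) (hM : ∀ g, g ∈ M ↔ χ₁ g = 0)
    (hσ₁ : χ₁ σ = 1) (g : G) : g * σ⁻¹ ^ (χ₁ g).val ∈ M := by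
  rw [hM, hχ₁, hχ₁.map_pow, hχ₁.map_inv, hσ₁, nsmul_eq_mul, ZMod.natCast_zmod_val]
  ring

theorem map_conjNormal_pow [M.Normal] (hχ₂ : IsMulAddHom χ₂)
    (hd : ∀ h : M, ω (MulAut.conjNormal σ h) = ω h + χ₂ h) (n : ℕ) (h : M) :
    ω (MulAut.conjNormal (σ ^ n) h) = ω h + n * χ₂ h := by
  induction n with
  | zero => simp
  | succ n ih =>
    rw [pow_succ', map_mul, MulAut.mul_apply, hd, ih, MulAut.conjNormal_apply, hχ₂.map_conj]
    push_cast; ring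

theorem isUnipotentLift_comp [NeZero m] [M.Normal] (hχ₁ : IsMulAddHom χ₁) (hχ₂ : IsMulAddHom χ₂)
    (hω : IsMulAddHom ω) (hσ₂ : χ₂ σ = 0) (hσm : σ ^ m ∈ M) (hωσ : ω ⟨σ ^ m, hσm⟩ = 0)
    (hd : ∀ h : M, ω (MulAut.conjNormal σ h) = ω h + χ₂ h)
    (π : G → M) (hπ : ∀ g, (π g : G) = g * σ⁻¹ ^ (χ₁ g).val) :
    IsUnipotentLift χ₁ χ₂ (ω ∘ π) := by
  intro a b
  have hdecomp : π (a * b) = π a * MulAut.conjNormal (σ ^ (χ₁ a).val) (π b) *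
      ⟨σ ^ m, hσm⟩ ^ (((χ₁ a).val + (χ₁ b).val) / m) := by
    ext
    simp only [Subgroup.coe_mul, Subgroup.coe_pow, MulAut.conjNormal_apply, hπ]
    apply mul_mul_inv_pow_eq
    rw [hχ₁, ZMod.val_add]
    exact Nat.mod_add_div _ _
  have hχ₂π : χ₂ (π b) = χ₂ b := by
    rw [hπ, hχ₂, hχ₂.map_pow, hχ₂.map_inv, hσ₂, neg_zero, smul_zero, add_zero]
  simp only [Function.comp_apply, hdecomp, hω _, hω.map_pow, hωσ, map_conjNormal_pow hχ₂ hd,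
    hχ₂π, smul_zero, ZMod.natCast_val, ZMod.cast_id', id]
  ring

end Construction

theorem lift_iff_sigma_condition_general (m : ℕ) (hm : 2 ≤ m)
    (G : Type) [Group G] [TopologicalSpace G] [IsTopologicalGroup G]
    (χ₁ χ₂ : G → ZMod m) (hχ₁ : IsChar χ₁) (hχ₂ : IsChar χ₂)
    (M₁ : Subgroup G) (hM₁ : ∀ g, g ∈ M₁ ↔ χ₁ g = 0)
    (σ₁ : G) (hσ₁ : χ₁ σ₁ = 1) (hσ₁' : χ₂ σ₁ = 0)
    (ω : M₁ → ZMod m) (hω : ∀ a b : M₁, ω (a * b) = ω a + ω b)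
    (hωc : IsLocallyConstant ω)
    (hσm : σ₁ ^ m ∈ M₁) (hωσ : ω ⟨σ₁ ^ m, hσm⟩ = 0) :
    (∃ f : G → ZMod m, IsLocallyConstant f ∧
        (∀ g (hg : g ∈ M₁), f g = ω ⟨g, hg⟩) ∧
        (∀ g h : G,
          (!![1, χ₁ (g * h), f (g * h); 0, 1, χ₂ (g * h); 0, 0, 1] :
              Matrix (Fin 3) (Fin 3) (ZMod m))
            = !![1, χ₁ g, f g; 0, 1, χ₂ g; 0, 0, 1] *
              !![1, χ₁ h, f h; 0, 1, χ₂ h; 0, 0, 1])) ↔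
      (∀ g (hg : g ∈ M₁) (hg' : σ₁ * g * σ₁⁻¹ ∈ M₁),
        ω ⟨σ₁ * g * σ₁⁻¹, hg'⟩ - ω ⟨g, hg⟩ = χ₂ g) := by
  have : NeZero m := ⟨by omega⟩
  have : M₁.Normal := IsMulAddHom.normal_of_mem_iff hχ₁.1 hM₁
  constructor
  · rintro ⟨f, -, hres, hmul⟩ g hg hg'
    have hf := (IsUnipotentLift.iff_unitriangular_mul hχ₁.1 hχ₂.1).2 hmul
    rw [← hres, ← hres, hf.map_conj hχ₁.1 hχ₂.1, hσ₁, hσ₁', (hM₁ g).1 hg]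
    ring
  · intro hd
    have hconj : ∀ h : M₁, ω (MulAut.conjNormal σ₁ h) = ω h + χ₂ h := fun h => by
      rw [← hd h h.2 (MulAut.conjNormal σ₁ h).2, add_sub_cancel]
      exact congrArg ω (Subtype.ext (MulAut.conjNormal_apply σ₁ h))
    let π : G → M₁ := fun g => ⟨g * σ₁⁻¹ ^ (χ₁ g).val, mul_inv_pow_val_mem hχ₁.1 hM₁ hσ₁ g⟩
    refine ⟨ω ∘ π, hωc.comp_continuous ?_, fun g hg => ?_, ?_⟩
    · exact (continuous_id.mul (hχ₁.2.comp fun c => σ₁⁻¹ ^ c.val).continuous).subtype_mk _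
    · simp [π, (hM₁ g).1 hg]
    · exact (IsUnipotentLift.iff_unitriangular_mul hχ₁.1 hχ₂.1).1
        (isUnipotentLift_comp hχ₁.1 hχ₂.1 hω hσ₁' hσm hωσ hconj π fun _ => rfl)

/-- Let `G` be profinite, `m ≥ 2`, `χ₁, χ₂ ∈ H¹(G, ℤ/m)`, `M₁ = Ker χ₁`, and `σ₁ ∈ G` with
`χ₁(σ₁) = 1`, `χ₂(σ₁) = 0`.  Let `ω : M₁ → ℤ/m` be a continuous homomorphism trivial on
`σ₁^m`.  Then the following are equivalent: (a) there is a continuous homomorphism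
`ρ : G → U_2(ℤ/m)` with `ρ_{12} = χ₁`, `ρ_{23} = χ₂` and `ω = Res_{M₁}(ρ_{13})`;
(d) `(σ₁ − 1)ω = Res_{M₁}(χ₂)`. -/
theorem lift_iff_sigma_condition (m : ℕ) (hm : 2 ≤ m)
    (G : Type) [Group G] [TopologicalSpace G] [IsTopologicalGroup G]
    [CompactSpace G] [TotallyDisconnectedSpace G] [T2Space G]
    (χ₁ χ₂ : G → ZMod m) (hχ₁ : IsChar χ₁) (hχ₂ : IsChar χ₂)
    (M₁ : Subgroup G) (hM₁ : ∀ g, g ∈ M₁ ↔ χ₁ g = 0)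
    (σ₁ : G) (hσ₁ : χ₁ σ₁ = 1) (hσ₁' : χ₂ σ₁ = 0)
    (ω : M₁ → ZMod m) (hω : ∀ a b : M₁, ω (a * b) = ω a + ω b)
    (hωc : IsLocallyConstant ω)
    (hσm : σ₁ ^ m ∈ M₁) (hωσ : ω ⟨σ₁ ^ m, hσm⟩ = 0) :
    (∃ f : G → ZMod m, IsLocallyConstant f ∧
        (∀ g (hg : g ∈ M₁), f g = ω ⟨g, hg⟩) ∧
        (∀ g h : G,
          (!![1, χ₁ (g * h), f (g * h); 0, 1, χ₂ (g * h); 0, 0, 1] :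
              Matrix (Fin 3) (Fin 3) (ZMod m))
            = !![1, χ₁ g, f g; 0, 1, χ₂ g; 0, 0, 1] *
              !![1, χ₁ h, f h; 0, 1, χ₂ h; 0, 0, 1])) ↔
      (∀ g (hg : g ∈ M₁) (hg' : σ₁ * g * σ₁⁻¹ ∈ M₁),
        ω ⟨σ₁ * g * σ₁⁻¹, hg'⟩ - ω ⟨g, hg⟩ = χ₂ g) :=
  lift_iff_sigma_condition_general m hm G χ₁ χ₂ hχ₁ hχ₂ M₁ hM₁ σ₁ hσ₁ hσ₁' ω hω hωc hσm hωσ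
end

section
/- In the setting of the preceding statement, if for some z ∈ Z/m the map ψ_z : G → U_2(Z/m) defined by ψ_z(hσ₁^i) = [[1, i, ω(h)+iz],[0,1,χ₂(h)],[0,0,1]] (h ∈ M₁, 0 ≤ i ≤ m−1) is a group homomorphism, then ψ_z is a group homomorphism for every z ∈ Z/m. -/
open Matrix

/-- The map `ψ_z : G → U_2(ℤ/m)`, `ψ_z(hσ₁^i) = [[1, i, ω(h)+iz],[0,1,χ₂(h)],[0,0,1]]`,
expressed via `χ₁` (which records `i`) and a function `w` recording `ω(h)`. -/
def psiZ {m : ℕ} {G : Type} [Group G] (χ₁ χ₂ w : G → ZMod m) (z : ZMod m) (g : G) :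
    Matrix (Fin 3) (Fin 3) (ZMod m) :=
  !![1, χ₁ g, w g + χ₁ g * z; 0, 1, χ₂ g; 0, 0, 1]

/-!
Since `χ₁` and `χ₂` are additive, the only entry of `ψ_z(gh)` and `ψ_z(g) ψ_z(h)` that can differ
is the corner one, and there the terms involving `z` are `χ₁(gh) z` and `(χ₁ g + χ₁ h) z`, which
agree. Hence whether `ψ_z` is multiplicative does not depend on `z`.
-/

theorem psiZ_mul_eq_mul_iff {m : ℕ} {G : Type} [Group G] (χ₁ χ₂ w : G → ZMod m)
    (hχ₁ : ∀ g h, χ₁ (g * h) = χ₁ g + χ₁ h) (hχ₂ : ∀ g h, χ₂ (g * h) = χ₂ g + χ₂ h)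
    (z : ZMod m) (g h : G) :
    psiZ χ₁ χ₂ w z (g * h) = psiZ χ₁ χ₂ w z g * psiZ χ₁ χ₂ w z h ↔
      w (g * h) = w g + w h + χ₁ g * χ₂ h := by
  simp only [psiZ, mul_fin_three, hχ₁, hχ₂, ← ext_iff]
  constructor
  · intro H
    have corner := H 0 2
    simp only [of_apply, cons_val', cons_val_zero, cons_val_two, empty_val', cons_val_fin_one,
      Nat.succ_eq_add_one, Nat.reduceAdd, tail_cons, head_cons] at corner
    linear_combination corner
  · intro H i j
    fin_cases i <;> fin_cases j <;> simp [H] <;> ring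

theorem psiZ_hom_forall_of_exists_general (m : ℕ)
    (G : Type) [Group G] [TopologicalSpace G]
    (χ₁ χ₂ : G → ZMod m) (hχ₁ : IsChar χ₁) (hχ₂ : IsChar χ₂)
    (w : G → ZMod m) :
    (∃ z : ZMod m, ∀ g h : G, psiZ χ₁ χ₂ w z (g * h) = psiZ χ₁ χ₂ w z g * psiZ χ₁ χ₂ w z h) →
      ∀ z : ZMod m, ∀ g h : G,
        psiZ χ₁ χ₂ w z (g * h) = psiZ χ₁ χ₂ w z g * psiZ χ₁ χ₂ w z h := by
  rintro ⟨z₀, hz₀⟩ z g h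
  rw [psiZ_mul_eq_mul_iff χ₁ χ₂ w hχ₁.1 hχ₂.1]
  exact (psiZ_mul_eq_mul_iff χ₁ χ₂ w hχ₁.1 hχ₂.1 z₀ g h).mp (hz₀ g h)

/-- If for some `z ∈ ℤ/m` the map `ψ_z` is a group homomorphism, then `ψ_z` is a group
homomorphism for every `z ∈ ℤ/m`. -/
theorem psiZ_hom_forall_of_exists (m : ℕ) (hm : 2 ≤ m)
    (G : Type) [Group G] [TopologicalSpace G] [IsTopologicalGroup G]
    [CompactSpace G] [TotallyDisconnectedSpace G] [T2Space G]
    (χ₁ χ₂ : G → ZMod m) (hχ₁ : IsChar χ₁) (hχ₂ : IsChar χ₂)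
    (M₁ : Subgroup G) (hM₁ : ∀ g, g ∈ M₁ ↔ χ₁ g = 0)
    (σ₁ : G) (hσ₁ : χ₁ σ₁ = 1) (hσ₁' : χ₂ σ₁ = 0)
    (ω : M₁ → ZMod m) (hω : ∀ a b : M₁, ω (a * b) = ω a + ω b)
    (hωc : IsLocallyConstant ω)
    (hσm : σ₁ ^ m ∈ M₁) (hωσ : ω ⟨σ₁ ^ m, hσm⟩ = 0)
    (w : G → ZMod m)
    (hw : ∀ (a : M₁) (i : ℕ), i < m → w ((a : G) * σ₁ ^ i) = ω a) :
    (∃ z : ZMod m, ∀ g h : G, psiZ χ₁ χ₂ w z (g * h) = psiZ χ₁ χ₂ w z g * psiZ χ₁ χ₂ w z h) →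
      ∀ z : ZMod m, ∀ g h : G,
        psiZ χ₁ χ₂ w z (g * h) = psiZ χ₁ χ₂ w z g * psiZ χ₁ χ₂ w z h :=
  psiZ_hom_forall_of_exists_general m G χ₁ χ₂ hχ₁ hχ₂ w
end
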